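/- arXiv:1105.3797 — 2 statements merged into one kernel-verified Lean document; each statement's English description precedes it below -/
import Mathlib

section
/- Assume hypothesis (H1) holds and p⁻ = q⁺ + 1. Then there exists λ* > 0 such that for every λ ∈ (0, λ*) the functional J_λ is coercive, i.e. J_λ(u) → +∞ as ‖u‖ → ∞. -/
/-!
‖u‖ bounds every difference |Δu(k−1)|, hence |u(k)| ≤ (T+1)‖u‖, and at least one difference
satisfies |Δu(k−1)| ≥ ‖u‖/√(T+1). Once ‖u‖ ≥ √(T+1) this difference is ≥ 1, so the gradient
term is at least ‖u‖^{p⁻}/(P·√(T+1)^{p⁻}) for any upper bound P of p, while (H1) bounds the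
potential term by (Σ a)((T+1)‖u‖)^{q⁺+1} + (Σ |b|)(T+1)‖u‖. Since q⁺ + 1 = p⁻, both leading
terms have the same order, and for small λ the difference keeps a positive coefficient of
‖u‖^{p⁻} with p⁻ > 1.
-/

/-- The norm ‖u‖ = (Σ_{k=1}^{T+1} |Δu(k−1)|²)^{1/2} on H. -/
noncomputable def normH (T : ℕ) (u : ℕ → ℝ) : ℝ :=
  Real.sqrt (∑ k ∈ Finset.Icc 1 (T + 1), |u k - u (k - 1)| ^ 2)

/-- F(k,t) = ∫₀ᵗ f(k,τ) dτ. -/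
noncomputable def Fint (f : ℕ → ℝ → ℝ) (k : ℕ) (t : ℝ) : ℝ :=
  ∫ τ in (0:ℝ)..t, f k τ

/-- The functional J_λ(u) = Σ_{k=1}^{T+1} (1/p(k−1))|Δu(k−1)|^{p(k−1)} − λ Σ_{k=1}^{T} F(k,u(k)). -/
noncomputable def Jlam (T : ℕ) (p : ℕ → ℝ) (f : ℕ → ℝ → ℝ) (lam : ℝ) (u : ℕ → ℝ) : ℝ :=
  (∑ k ∈ Finset.Icc 1 (T + 1), (1 / p (k - 1)) * |u k - u (k - 1)| ^ p (k - 1))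
    - lam * ∑ k ∈ Finset.Icc 1 T, Fint f k (u k)

open Finset Filter

section DiscreteNorm

variable {T : ℕ} {u : ℕ → ℝ}

lemma normH_nonneg : 0 ≤ normH T u := Real.sqrt_nonneg _

lemma normH_sq : normH T u ^ 2 = ∑ k ∈ Icc 1 (T + 1), |u k - u (k - 1)| ^ 2 :=
  Real.sq_sqrt (sum_nonneg fun _ _ => sq_nonneg _)

lemma abs_sub_le_normH {k : ℕ} (hk : k ∈ Icc 1 (T + 1)) : |u k - u (k - 1)| ≤ normH T u := by
  rw [← abs_abs]
  exact Real.abs_le_sqrt <|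
    single_le_sum (f := fun j => |u j - u (j - 1)| ^ 2) (fun _ _ => sq_nonneg _) hk

lemma abs_le_mul_normH (hu0 : u 0 = 0) {k : ℕ} (hk : k ≤ T + 1) :
    |u k| ≤ (T + 1) * normH T u := by
  have hsum : u k = ∑ i ∈ range k, (u (i + 1) - u i) := by
    rw [sum_range_sub u k, hu0, sub_zero]
  calc |u k| ≤ ∑ i ∈ range k, |u (i + 1) - u i| := hsum ▸ abs_sum_le_sum_abs _ _
    _ ≤ ∑ _i ∈ range k, normH T u := sum_le_sum fun i hi => by
        simpa using abs_sub_le_normH (u := u) (k := i + 1)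
          (mem_Icc.mpr ⟨by omega, by simp at hi; omega⟩)
    _ = k * normH T u := by simp
    _ ≤ (T + 1) * normH T u := by
        gcongr
        · exact normH_nonneg
        · exact_mod_cast hk

lemma exists_normH_div_le_abs_sub :
    ∃ k ∈ Icc 1 (T + 1), normH T u / √(T + 1) ≤ |u k - u (k - 1)| := by
  have hT : (0 : ℝ) < T + 1 := by positivity
  have hsum : ∑ _k ∈ Icc 1 (T + 1), normH T u ^ 2 / (T + 1) =
      ∑ k ∈ Icc 1 (T + 1), |u k - u (k - 1)| ^ 2 := by
    rw [← normH_sq, sum_const, Nat.card_Icc, nsmul_eq_mul]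
    push_cast
    field_simp
  obtain ⟨k, hk, hle⟩ :=
    exists_le_of_sum_le ⟨1, mem_Icc.mpr ⟨le_rfl, by omega⟩⟩ hsum.le
  refine ⟨k, hk, (sq_le_sq₀ (div_nonneg normH_nonneg (Real.sqrt_nonneg _)) (abs_nonneg _)).mp ?_⟩
  rwa [div_pow, Real.sq_sqrt hT.le]

end DiscreteNorm

lemma abs_Fint_le {f : ℕ → ℝ → ℝ} {k : ℕ} {x K : ℝ} (hf : ∀ t, |t| ≤ |x| → |f k t| ≤ K) :
    |Fint f k x| ≤ K * |x| := by
  simpa [Fint] using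
    intervalIntegral.norm_integral_le_of_norm_le_const (a := 0) (b := x) (f := f k)
      fun t ht => hf t (by simpa using Set.abs_sub_left_of_mem_uIcc (Set.uIoc_subset_uIcc ht))

lemma tendsto_mul_rpow_sub_mul_atTop {c r : ℝ} (hc : 0 < c) (hr : 1 < r) (D : ℝ) :
    Tendsto (fun n : ℝ => c * n ^ r - D * n) atTop atTop := by
  have h : Tendsto (fun n : ℝ => n * (c * n ^ (r - 1) + -D)) atTop atTop :=
    tendsto_id.atTop_mul_atTop₀ <| tendsto_atTop_add_const_right _ _ <|
      (tendsto_rpow_atTop (by linarith)).const_mul_atTop hc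
  refine h.congr' ?_
  filter_upwards [eventually_ge_atTop 0] with n hn
  rw [show r = 1 + (r - 1) by ring, Real.rpow_one_add' hn (by linarith)]
  ring_nf

lemma div_rpow_le_sum_rpow {T : ℕ} {u : ℕ → ℝ} {p : ℕ → ℝ} {pm P : ℝ}
    (hp : ∀ k ≤ T + 1, 1 < p k) (hpm : ∀ k ≤ T + 1, pm ≤ p k) (hP : ∀ k ≤ T + 1, p k ≤ P)
    (hn : √(T + 1) ≤ normH T u) :
    (normH T u / √(T + 1)) ^ pm / P ≤
      ∑ k ∈ Icc 1 (T + 1), 1 / p (k - 1) * |u k - u (k - 1)| ^ p (k - 1) := by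
  obtain ⟨k, hk, hle⟩ := exists_normH_div_le_abs_sub (T := T) (u := u)
  have hk' : k - 1 ≤ T + 1 := by simp only [mem_Icc] at hk; omega
  have hpk := hp _ hk'
  have hn1 : 1 ≤ normH T u / √(T + 1) := (one_le_div (by positivity)).mpr hn
  calc (normH T u / √(T + 1)) ^ pm / P
      ≤ |u k - u (k - 1)| ^ p (k - 1) / p (k - 1) := by
        refine div_le_div₀ (by positivity) ?_ (by linarith) (hP _ hk')
        calc (normH T u / √(T + 1)) ^ pm ≤ (normH T u / √(T + 1)) ^ p (k - 1) :=
              Real.rpow_le_rpow_of_exponent_le hn1 (hpm _ hk')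
          _ ≤ |u k - u (k - 1)| ^ p (k - 1) := by gcongr
    _ = 1 / p (k - 1) * |u k - u (k - 1)| ^ p (k - 1) := by ring
    _ ≤ _ := single_le_sum (f := fun k => 1 / p (k - 1) * |u k - u (k - 1)| ^ p (k - 1))
        (fun j hj => by
          have := hp (j - 1) (by simp only [mem_Icc] at hj; omega)
          positivity) hk

lemma abs_Fint_le_of_growth {f : ℕ → ℝ → ℝ} {k : ℕ} {a b q qp r x : ℝ} (ha : 0 ≤ a)
    (hq : 0 ≤ q) (hqp : q ≤ qp) (hr : 1 ≤ r) (hx : |x| ≤ r)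
    (hf : ∀ t, |f k t| ≤ a * |t| ^ q + b) : |Fint f k x| ≤ a * r ^ (qp + 1) + |b| * r := by
  calc |Fint f k x| ≤ (a * r ^ q + |b|) * |x| :=
        abs_Fint_le fun t ht => (hf t).trans (by gcongr; exacts [ht.trans hx, le_abs_self b])
    _ ≤ (a * r ^ qp + |b|) * r := by gcongr
    _ = a * r ^ (qp + 1) + |b| * r := by rw [Real.rpow_add_one (by positivity)]; ring

lemma sum_Fint_le {T : ℕ} {q a b : ℕ → ℝ} {f : ℕ → ℝ → ℝ} {qp r : ℝ} {u : ℕ → ℝ}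
    (hq : ∀ k, 1 ≤ k → k ≤ T → 0 ≤ q k) (hqp : ∀ k, 1 ≤ k → k ≤ T → q k ≤ qp)
    (ha : ∀ k, 1 ≤ k → k ≤ T → 0 ≤ a k)
    (hf : ∀ k, 1 ≤ k → k ≤ T → ∀ t : ℝ, |f k t| ≤ a k * |t| ^ q k + b k)
    (hr : 1 ≤ r) (hu : ∀ k ≤ T, |u k| ≤ r) :
    ∑ k ∈ Icc 1 T, Fint f k (u k) ≤
      (∑ k ∈ Icc 1 T, a k) * r ^ (qp + 1) + (∑ k ∈ Icc 1 T, |b k|) * r := by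
  rw [sum_mul, sum_mul, ← sum_add_distrib]
  refine sum_le_sum fun k hk => (le_abs_self _).trans ?_
  obtain ⟨h1, h2⟩ := mem_Icc.mp hk
  exact abs_Fint_le_of_growth (ha k h1 h2) (hq k h1 h2) (hqp k h1 h2) hr (hu k h2) (hf k h1 h2)

lemma le_Jlam {T : ℕ} {p q a b : ℕ → ℝ} {f : ℕ → ℝ → ℝ} {pm qp P lam : ℝ} {u : ℕ → ℝ}
    (hp : ∀ k ≤ T + 1, 1 < p k) (hpm : ∀ k ≤ T + 1, pm ≤ p k) (hP : ∀ k ≤ T + 1, p k ≤ P)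
    (hq : ∀ k, 1 ≤ k → k ≤ T → 0 ≤ q k) (hqp : ∀ k, 1 ≤ k → k ≤ T → q k ≤ qp)
    (ha : ∀ k, 1 ≤ k → k ≤ T → 0 ≤ a k)
    (hf : ∀ k, 1 ≤ k → k ≤ T → ∀ t : ℝ, |f k t| ≤ a k * |t| ^ q k + b k)
    (hpq : pm = qp + 1) (hlam : 0 ≤ lam) (hu0 : u 0 = 0) (hn : √(T + 1) ≤ normH T u) :
    (1 / (P * √(T + 1) ^ pm) - lam * ((∑ k ∈ Icc 1 T, a k) * (T + 1) ^ pm)) * normH T u ^ pm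
      - lam * ((∑ k ∈ Icc 1 T, |b k|) * (T + 1)) * normH T u ≤ Jlam T p f lam u := by
  have hP0 : 0 < P := by linarith [hp 0 (by omega), hP 0 (by omega)]
  have hn0 : 0 ≤ normH T u := normH_nonneg
  have hr : 1 ≤ (T + 1) * normH T u :=
    one_le_mul_of_one_le_of_one_le (by simp) ((Real.one_le_sqrt.mpr (by simp)).trans hn)
  calc _ = (normH T u / √(T + 1)) ^ pm / P - lam * ((∑ k ∈ Icc 1 T, a k)
          * ((T + 1) * normH T u) ^ pm + (∑ k ∈ Icc 1 T, |b k|) * ((T + 1) * normH T u)) := by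
        rw [Real.div_rpow hn0 (by positivity), Real.mul_rpow (by positivity) hn0]
        field_simp
        ring
    _ ≤ Jlam T p f lam u := by
        rw [Jlam]
        gcongr ?_ - lam * ?_
        · exact div_rpow_le_sum_rpow hp hpm hP hn
        · rw [hpq]
          exact sum_Fint_le hq hqp ha hf hr fun k hk => abs_le_mul_normH hu0 (by omega)

theorem stmt5_general (T : ℕ) (p : ℕ → ℝ) (hp : ∀ k ≤ T + 1, 1 < p k)
    (q : ℕ → ℝ) (hq : ∀ k, 1 ≤ k → k ≤ T → 0 < q k)
    (pm : ℝ) (hpm : IsLeast (p '' Set.Icc 0 (T + 1)) pm)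
    (qp : ℝ) (hqp : IsGreatest (q '' Set.Icc 1 T) qp)
    (f : ℕ → ℝ → ℝ)
    -- Hypothesis (H1)
    (a b : ℕ → ℝ) (ha : ∀ k, 1 ≤ k → k ≤ T → 0 < a k)
    (hH1 : ∀ k, 1 ≤ k → k ≤ T → ∀ t : ℝ, |f k t| ≤ a k * |t| ^ q k + b k)
    (hpq : pm = qp + 1) :
    ∃ lamStar > (0:ℝ), ∀ lam : ℝ, 0 < lam → lam < lamStar →
      ∀ M : ℝ, ∃ R : ℝ, ∀ u : ℕ → ℝ, u 0 = 0 → u (T + 1) = 0 →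
        R < normH T u → M ≤ Jlam T p f lam u := by
  obtain ⟨P, hP⟩ := ((Set.finite_Icc 0 (T + 1)).image p).bddAbove
  have hpP : ∀ k ≤ T + 1, p k ≤ P := fun k hk => hP ⟨k, ⟨k.zero_le, hk⟩, rfl⟩
  have hP0 : 0 < P := by linarith [hp 0 (by omega), hpP 0 (by omega)]
  have hpm1 : 1 < pm := by obtain ⟨k, hk, rfl⟩ := hpm.1; exact hp k hk.2
  have hA : 0 ≤ ∑ k ∈ Icc 1 T, a k :=
    sum_nonneg fun k hk => (ha k (mem_Icc.mp hk).1 (mem_Icc.mp hk).2).le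
  set A := ∑ k ∈ Icc 1 T, a k
  set c := 1 / (P * √((T : ℝ) + 1) ^ pm)
  refine ⟨c / (A * ((T : ℝ) + 1) ^ pm + 1), by positivity, fun lam hlam hlt M => ?_⟩
  have hcoef : 0 < c - lam * (A * ((T : ℝ) + 1) ^ pm) := by
    have := (lt_div_iff₀ (by positivity)).mp hlt
    nlinarith [mul_nonneg hA (Real.rpow_nonneg (show (0 : ℝ) ≤ T + 1 by positivity) pm)]
  obtain ⟨R, hR⟩ := tendsto_atTop_atTop.mp
    (tendsto_mul_rpow_sub_mul_atTop hcoef hpm1 (lam * ((∑ k ∈ Icc 1 T, |b k|) * (T + 1)))) M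
  refine ⟨max R √((T : ℝ) + 1), fun u hu0 _ hu => ?_⟩
  exact (hR _ ((le_max_left _ _).trans hu.le)).trans <|
    le_Jlam hp (fun k hk => hpm.2 ⟨k, ⟨k.zero_le, hk⟩, rfl⟩) hpP (fun k h1 h2 => (hq k h1 h2).le)
      (fun k h1 h2 => hqp.2 ⟨k, ⟨h1, h2⟩, rfl⟩) (fun k h1 h2 => (ha k h1 h2).le) hH1 hpq hlam.le hu0
      ((le_max_right _ _).trans hu.le)

theorem stmt5 (T : ℕ) (hT : 1 ≤ T) (p : ℕ → ℝ) (hp : ∀ k ≤ T + 1, 1 < p k)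
    (q : ℕ → ℝ) (hq : ∀ k, 1 ≤ k → k ≤ T → 0 < q k)
    (pm : ℝ) (hpm : IsLeast (p '' Set.Icc 0 (T + 1)) pm)
    (qp : ℝ) (hqp : IsGreatest (q '' Set.Icc 1 T) qp)
    (f : ℕ → ℝ → ℝ) (hf : ∀ k, 1 ≤ k → k ≤ T → Continuous (f k))
    -- Hypothesis (H1)
    (a b : ℕ → ℝ) (ha : ∀ k, 1 ≤ k → k ≤ T → 0 < a k)
    (hH1 : ∀ k, 1 ≤ k → k ≤ T → ∀ t : ℝ, |f k t| ≤ a k * |t| ^ q k + b k)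
    (hpq : pm = qp + 1) :
    ∃ lamStar > (0:ℝ), ∀ lam : ℝ, 0 < lam → lam < lamStar →
      ∀ M : ℝ, ∃ R : ℝ, ∀ u : ℕ → ℝ, u 0 = 0 → u (T + 1) = 0 →
        R < normH T u → M ≤ Jlam T p f lam u :=
  stmt5_general T p hp q hq pm hpm qp hqp f a b ha hH1 hpq
end

section
/- Let 0 < r′ < s′ and suppose there is a constant c > 0 such that r′ < (1/2)·(c·p⁻/(T+1))^{1/p⁺} and s′ > ((T+1)/2)·(c·p⁺)^{1/p⁻}. Assume: (1) for every k ∈ {1,...,T} and every ε > 0 there exists K > 0 such that F(k,t) ≤ ε·|t|^{p⁻} whenever |t| > K; (2) there exist t₁,...,t_T ∈ ℝ with Σ_{k=1}^{T} F(k,t_k) > Σ_{k=1}^{T} sup_{|t|≤s′} F(k,t); (3) for every k ∈ {1,...,T}, sup_{r′≤|t|≤s′} F(k,t) ≤ −Σ_{h≠k} sup_{|t|≤s′} F(h,t). Then there exists λ* > 0 such that E_{λ*} has at least three critical points in H, at least two of which are nonzero. -/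
/-- μ(u) = Σ_{k=1}^{T+1} (1/p(k−1))|Δu(k−1)|^{p(k−1)}. -/
noncomputable def muF (T : ℕ) (p : ℕ → ℝ) (u : ℕ → ℝ) : ℝ :=
  ∑ k ∈ Finset.Icc 1 (T + 1), (1 / p (k - 1)) * |u k - u (k - 1)| ^ p (k - 1)

/-- ‖u‖_∞ = max_{1 ≤ k ≤ T} |u(k)| (as the supremum of the corresponding set). -/
noncomputable def supNorm (T : ℕ) (u : ℕ → ℝ) : ℝ :=
  sSup {x : ℝ | ∃ k, 1 ≤ k ∧ k ≤ T ∧ x = |u k|}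

/-- sup_{|t| ≤ σ} F(k,t). -/
noncomputable def supFle (f : ℕ → ℝ → ℝ) (k : ℕ) (σ : ℝ) : ℝ :=
  sSup {y : ℝ | ∃ t : ℝ, |t| ≤ σ ∧ y = Fint f k t}

/-- sup_{ρ ≤ |t| ≤ σ} F(k,t). -/
noncomputable def supFbetween (f : ℕ → ℝ → ℝ) (k : ℕ) (ρ σ : ℝ) : ℝ :=
  sSup {y : ℝ | ∃ t : ℝ, ρ ≤ |t| ∧ |t| ≤ σ ∧ y = Fint f k t}

/-- r′ = inf{‖u‖_∞ : u ∈ H, μ(u) ≥ r}. -/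
noncomputable def rPrime (T : ℕ) (p : ℕ → ℝ) (r : ℝ) : ℝ :=
  sInf {x : ℝ | ∃ u : ℕ → ℝ, u 0 = 0 ∧ u (T + 1) = 0 ∧ r ≤ muF T p u ∧ x = supNorm T u}

/-- s′ = sup{‖u‖_∞ : u ∈ H, μ(u) ≤ s}. -/
noncomputable def sPrime (T : ℕ) (p : ℕ → ℝ) (s : ℝ) : ℝ :=
  sSup {x : ℝ | ∃ u : ℕ → ℝ, u 0 = 0 ∧ u (T + 1) = 0 ∧ muF T p u ≤ s ∧ x = supNorm T u}

/-- `u ∈ H` is a critical point of `E_λ = μ + λ·J`: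
`Σ_{k=1}^{T+1} |Δu(k−1)|^{p(k−1)−2}Δu(k−1)·Δv(k−1) = λ·Σ_{k=1}^{T} f(k,u(k))·v(k)` for all `v ∈ H`. -/
def IsCriticalPoint (T : ℕ) (p : ℕ → ℝ) (f : ℕ → ℝ → ℝ) (lam : ℝ) (u : ℕ → ℝ) : Prop :=
  u 0 = 0 ∧ u (T + 1) = 0 ∧ ∀ v : ℕ → ℝ, v 0 = 0 → v (T + 1) = 0 →
    ∑ k ∈ Finset.Icc 1 (T + 1),
        |u k - u (k - 1)| ^ (p (k - 1) - 2) * (u k - u (k - 1)) * (v k - v (k - 1))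
      = lam * ∑ k ∈ Finset.Icc 1 T, f k (u k) * v k

/-- `u` and `w` are distinct as elements of `H`. -/
def DistinctH (T : ℕ) (u w : ℕ → ℝ) : Prop :=
  ∃ k, 1 ≤ k ∧ k ≤ T ∧ u k ≠ w k

/-- `u ∈ H` is nonzero. -/
def NonzeroH (T : ℕ) (u : ℕ → ℝ) : Prop :=
  ∃ k, 1 ≤ k ∧ k ≤ T ∧ u k ≠ 0

/-
Identify `H` with `ℝ^T` and study `E_λ` there. Hypothesis (1) makes every sublevel set of
`E_λ` compact. By (3), `E_λ > 0 = E_λ 0` on the sup-norm annulus `r' ≤ ‖x‖∞ ≤ s'`, while on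
the ball `‖x‖∞ ≤ s'` one has `E_λ ≥ -λ Σ_k sup_{|t| ≤ s'} F(k,t)`; by (2), `λ` can be chosen
so that some point lies strictly below that bound. Then the minimiser of `E_λ` on the ball
lies in the hole `‖x‖∞ < r'` of the annulus, hence is a local minimum; the global minimiser
lies outside the ball; and the annulus is a mountain range between them, so the mountain pass
theorem yields a third critical point, of positive energy. In finite dimensions, with compact
sublevel sets, the mountain pass theorem follows by deforming an almost optimal path along
`-∇E_λ`.
-/
open Filter Topology
open scoped RealInnerProductSpace

theorem exists_isMinOn_of_isCompact_sublevel {X : Type*} [TopologicalSpace X] {E : X → ℝ}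
    (hE : Continuous E) (hsub : ∀ A, IsCompact {x | E x ≤ A}) {S : Set X} (hS : IsClosed S)
    (hne : S.Nonempty) : ∃ x ∈ S, IsMinOn E S x := by
  obtain ⟨z, hz⟩ := hne
  obtain ⟨x, ⟨hxS, -⟩, hx⟩ :=
    ((hsub (E z)).inter_left hS).exists_isMinOn ⟨z, hz, le_refl (E z)⟩ hE.continuousOn
  refine ⟨x, hxS, fun y hy => ?_⟩
  rcases le_total (E y) (E z) with hyz | hzy
  · exact hx ⟨hy, hyz⟩
  · exact (hx ⟨hz, le_refl (E z)⟩).trans hzy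

section CriticalPoints

open Set

variable {V : Type*} [NormedAddCommGroup V] [InnerProductSpace ℝ V] {E : V → ℝ}
  {G : V → V}

theorem hasDerivAt_add_smul_of_hasLineDerivAt {f : V → ℝ} {f' : V → ℝ} {v : V}
    (hf : ∀ x, HasLineDerivAt ℝ f (f' x) x v) (x : V) (t : ℝ) :
    HasDerivAt (fun s => f (x + s • v)) (f' (x + t • v)) t := by
  have h := HasDerivAt.comp_sub_const t t (by rw [sub_self]; exact hf (x + t • v))
  refine h.congr_of_eventuallyEq (Eventually.of_forall fun s => ?_)
  simp only [add_assoc, ← add_smul, add_sub_cancel]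

theorem eq_zero_of_isLocalMin (hEG : ∀ x v, HasLineDerivAt ℝ E ⟪G x, v⟫ x v) {x : V}
    (h : IsLocalMin E x) : G x = 0 :=
  inner_self_eq_zero.mp (h.hasLineDerivAt_eq_zero (hEG x (G x)))

theorem le_sub_mul_of_le_inner (hEG : ∀ x v, HasLineDerivAt ℝ E ⟪G x, v⟫ x v) {x : V}
    {s m : ℝ} (hs : 0 ≤ s) (h : ∀ t ∈ Icc 0 s, m ≤ ⟪G (x - t • G x), G x⟫) :
    E (x - s • G x) ≤ E x - s * m := by
  have hderiv : ∀ t, HasDerivAt (fun t => E (x + t • -G x) + t * m)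
      (⟪G (x + t • -G x), -G x⟫ + m) t := fun t =>
    (hasDerivAt_add_smul_of_hasLineDerivAt (hEG · (-G x)) x t).add (hasDerivAt_mul_const m)
  have hanti : AntitoneOn (fun t => E (x + t • -G x) + t * m) (Icc 0 s) := by
    refine antitoneOn_of_hasDerivWithinAt_nonpos (convex_Icc 0 s)
      (fun t _ => (hderiv t).continuousAt.continuousWithinAt)
      (fun t _ => (hderiv t).hasDerivWithinAt) fun t ht => ?_
    have := h t (interior_subset ht)
    rw [smul_neg, ← sub_eq_add_neg, inner_neg_right]
    linarith
  have := hanti ⟨le_rfl, hs⟩ ⟨hs, le_rfl⟩ hs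
  simp only [smul_neg, ← sub_eq_add_neg, zero_smul, sub_zero, zero_mul, add_zero] at this
  linarith

theorem IsCompact.exists_pos_forall_le_inner {K : Set V} (hK : IsCompact K)
    (hG : Continuous G) {m : ℝ} (hm : ∀ x ∈ K, m < ‖G x‖ ^ 2) :
    ∃ τ > (0 : ℝ), ∀ x ∈ K, ∀ t ∈ Icc 0 τ, m ≤ ⟪G (x - t • G x), G x⟫ := by
  have hopen : IsOpen {z : ℝ × V | m < ⟪G (z.2 - z.1 • G z.2), G z.2⟫} :=
    isOpen_lt continuous_const <| (hG.comp <| continuous_snd.sub <|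
      continuous_fst.smul (hG.comp continuous_snd)).inner (hG.comp continuous_snd)
  have hev : ∀ᶠ t in 𝓝 (0 : ℝ), ∀ x ∈ K, m < ⟪G (x - t • G x), G x⟫ :=
    hK.eventually_forall_of_forall_eventually fun x hx => hopen.mem_nhds <| by
      simpa [real_inner_self_eq_norm_sq] using hm x hx
  obtain ⟨ε, hε, hball⟩ := Metric.eventually_nhds_iff.mp hev
  refine ⟨ε / 2, by positivity, fun x hx t ht => (hball ?_ x hx).le⟩
  rw [Real.dist_eq, sub_zero, abs_of_nonneg ht.1]
  linarith [ht.2]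

theorem exists_deformation (hE : Continuous E) (hG : Continuous G)
    (hEG : ∀ x v, HasLineDerivAt ℝ E ⟪G x, v⟫ x v) (hsub : ∀ A, IsCompact {x | E x ≤ A})
    {c ε : ℝ} (hε : 0 < ε) (hcrit : ∀ x, c - ε ≤ E x → E x ≤ c + ε → G x ≠ 0) :
    ∃ η : V → V, Continuous η ∧ (∀ x, E x ≤ c - ε → η x = x) ∧ ∃ d > (0 : ℝ),
      ∀ x, E x ≤ c + ε → E (η x) ≤ E x ∧ (c - ε / 2 ≤ E x → E (η x) ≤ E x - d) := by
  set K := {x | c - ε ≤ E x} ∩ {x | E x ≤ c + ε}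
  have hK : IsCompact K := (hsub _).inter_left (isClosed_le continuous_const hE)
  obtain ⟨m, hm, hmK⟩ := hK.exists_forall_le' (f := fun x => ‖G x‖ ^ 2)
    (hG.norm.pow 2).continuousOn (a := 0) fun x hx => by have := hcrit x hx.1 hx.2; positivity
  obtain ⟨τ, hτ, hτK⟩ := hK.exists_pos_forall_le_inner hG (m := m / 2)
    fun x hx => by linarith [hmK x hx]
  -- `χ ∘ E` switches the flow off below `c - ε` and fully on above `c - ε / 2`
  obtain ⟨χ, hχ0, hχ1, hχI⟩ := exists_continuous_zero_one_of_isClosed isClosed_Iic isClosed_Ici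
    (Iic_disjoint_Ici.mpr (by linarith : ¬c - ε / 2 ≤ c - ε))
  refine ⟨fun x => x - (τ * χ (E x)) • G x,
    continuous_id.sub ((continuous_const.mul (χ.continuous.comp hE)).smul hG),
    fun x hx => by simp [hχ0 (mem_Iic.mpr hx)], τ * (m / 2), by positivity, fun x hx => ?_⟩
  have hdesc : E (x - (τ * χ (E x)) • G x) ≤ E x - τ * χ (E x) * (m / 2) := by
    rcases (hχI (E x)).1.eq_or_lt with h0 | hpos
    · simp [← h0]
    · have hxK : x ∈ K := ⟨not_lt.mp fun h => hpos.ne' (hχ0 (mem_Iic.mpr h.le)), hx⟩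
      exact le_sub_mul_of_le_inner hEG (mul_nonneg hτ.le (hχI _).1) fun t ht =>
        hτK x hxK t ⟨ht.1, ht.2.trans (mul_le_of_le_one_right hτ.le (hχI _).2)⟩
  have hdec : 0 ≤ τ * χ (E x) * (m / 2) := by
    have := (hχI (E x)).1; positivity
  refine ⟨by linarith, fun hx' => ?_⟩
  have h1 : χ (E x) = 1 := hχ1 (mem_Ici.mpr hx')
  simp only [h1, mul_one] at hdesc ⊢
  exact hdesc

theorem exists_critical_point_of_mountain_pass (hE : Continuous E) (hG : Continuous G)
    (hEG : ∀ x v, HasLineDerivAt ℝ E ⟪G x, v⟫ x v) (hsub : ∀ A, IsCompact {x | E x ≤ A})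
    {a b : V} {α β : ℝ} (ha : E a ≤ α) (hb : E b ≤ α) (hαβ : α < β)
    (hsep : ∀ γ : Path a b, ∃ t, β ≤ E (γ t)) : ∃ x, G x = 0 ∧ α < E x := by
  by_contra! hcrit
  set S := {m : ℝ | ∃ γ : Path a b, ∀ t, E (γ t) ≤ m}
  have hS : S.Nonempty := by
    let γ := (PathConnectedSpace.joined a b).somePath
    obtain ⟨m, hm⟩ := (isCompact_range (hE.comp γ.continuous)).bddAbove
    exact ⟨m, γ, fun t => hm ⟨t, rfl⟩⟩
  have hβS : ∀ m ∈ S, β ≤ m := by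
    rintro m ⟨γ, hγ⟩
    obtain ⟨t, ht⟩ := hsep γ
    exact ht.trans (hγ t)
  -- `c` is the minimax level; a deformation below it contradicts its definition
  set c := sInf S
  have hβc : β ≤ c := le_csInf hS hβS
  set ε := (c - α) / 2 with hε
  obtain ⟨η, hη, hηfix, d, hd, hηE⟩ := exists_deformation hE hG hEG hsub (c := c)
    (by linarith : 0 < ε) fun x hx _ h0 => by linarith [hcrit x h0]
  obtain ⟨m, ⟨γ, hγ⟩, hmc⟩ := exists_lt_of_csInf_lt hS
    (show c < c + min ε d / 2 by have := lt_min (by linarith : 0 < ε) hd; linarith)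
  let γ' : Path a b := (γ.map hη).cast (hηfix a (by linarith)).symm
    (hηfix b (by linarith)).symm
  have hγ' : ∀ t, E (γ' t) < c := fun t => by
    have hle := hηE (γ t) (by linarith [hγ t, min_le_left ε d])
    change E (η (γ t)) < c
    by_cases ht : c - ε / 2 ≤ E (γ t)
    · linarith [hle.2 ht, hγ t, min_le_right ε d]
    · linarith [hle.1]
  obtain ⟨t₀, -, ht₀⟩ := isCompact_univ.exists_isMaxOn univ_nonempty
    (hE.comp γ'.continuous).continuousOn
  exact (hγ' t₀).not_ge (csInf_le ⟨β, hβS⟩ ⟨γ', fun t => ht₀ (mem_univ t)⟩)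

theorem exists_three_critical_points (hE : Continuous E) (hG : Continuous G)
    (hEG : ∀ x v, HasLineDerivAt ℝ E ⟪G x, v⟫ x v) (hsub : ∀ A, IsCompact {x | E x ≤ A})
    {N : V → ℝ} (hN : Continuous N) {r s m : ℝ} (hrs : r ≤ s) {x₀ w : V} (hx₀ : N x₀ < r)
    (hann : ∀ x, r ≤ N x → N x ≤ s → E x₀ < E x) (hball : ∀ x, N x ≤ s → m ≤ E x)
    (hw : E w < m) :
    ∃ x₁ x₂ x₃, G x₁ = 0 ∧ G x₂ = 0 ∧ G x₃ = 0 ∧ E x₂ < E x₁ ∧ E x₁ ≤ E x₀ ∧ E x₀ < E x₃ := by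
  obtain ⟨x₁, hx₁s, hx₁⟩ := exists_isMinOn_of_isCompact_sublevel hE hsub
    (isClosed_le hN continuous_const) ⟨x₀, hx₀.le.trans hrs⟩
  have hx₁x₀ : E x₁ ≤ E x₀ := hx₁ (show N x₀ ≤ s from hx₀.le.trans hrs)
  have hx₁r : N x₁ < r := not_le.mp fun h => (hann x₁ h hx₁s).not_ge hx₁x₀
  have hG₁ : G x₁ = 0 := eq_zero_of_isLocalMin hEG <| hx₁.isLocalMin <|
    mem_of_superset ((isOpen_lt hN continuous_const).mem_nhds hx₁r) fun y hy =>
      show N y ≤ s from hy.le.trans hrs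
  obtain ⟨x₂, -, hx₂⟩ :=
    exists_isMinOn_of_isCompact_sublevel hE hsub isClosed_univ univ_nonempty
  have hx₂m : E x₂ < m := (hx₂ (mem_univ w)).trans_lt hw
  have hG₂ : G x₂ = 0 := eq_zero_of_isLocalMin hEG (hx₂.isLocalMin univ_mem)
  have hx₂s : s < N x₂ := not_le.mp fun h => (hball x₂ h).not_gt hx₂m
  have hx₂x₁ : E x₂ < E x₁ := hx₂m.trans_le (hball x₁ hx₁s)
  have hcross : ∀ γ : Path x₁ x₂, ∃ t, N (γ t) = r := fun γ =>
    intermediate_value_univ 0 1 (hN.comp γ.continuous)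
      ⟨by simpa using hx₁r.le, by simpa using hrs.trans hx₂s.le⟩
  obtain ⟨y, hy, hymin⟩ := exists_isMinOn_of_isCompact_sublevel hE hsub
    (isClosed_eq hN continuous_const)
    (by obtain ⟨t, ht⟩ := hcross (PathConnectedSpace.joined x₁ x₂).somePath; exact ⟨_, ht⟩)
  obtain ⟨x₃, hG₃, hx₃⟩ := exists_critical_point_of_mountain_pass hE hG hEG hsub hx₁x₀
    (hx₂x₁.le.trans hx₁x₀) (hann y hy.ge (hy.le.trans hrs)) fun γ =>
      (hcross γ).imp fun _ ht => hymin ht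
  exact ⟨x₁, x₂, x₃, hG₁, hG₂, hG₃, hx₂x₁, hx₁x₀, hx₃⟩

end CriticalPoints

section Primitive

variable {f : ℕ → ℝ → ℝ} {k : ℕ}

lemma hasDerivAt_Fint (hf : Continuous (f k)) (t : ℝ) : HasDerivAt (Fint f k) (f k t) t :=
  (hf.integral_hasStrictDerivAt 0 t).hasDerivAt

lemma continuous_Fint (hf : Continuous (f k)) : Continuous (Fint f k) :=
  continuous_iff_continuousAt.mpr fun t => (hasDerivAt_Fint hf t).continuousAt

@[simp]
lemma Fint_zero : Fint f k 0 = 0 :=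
  intervalIntegral.integral_same

lemma Fint_le_supFle (hf : Continuous (f k)) {σ t : ℝ} (ht : |t| ≤ σ) :
    Fint f k t ≤ supFle f k σ :=
  le_csSup ((isCompact_Icc.image (continuous_Fint hf)).bddAbove.mono <| by
    rintro _ ⟨s, hs, rfl⟩
    exact ⟨s, abs_le.mp hs, rfl⟩) ⟨t, ht, rfl⟩

lemma Fint_le_supFbetween (hf : Continuous (f k)) {ρ σ t : ℝ} (hρ : ρ ≤ |t|) (hσ : |t| ≤ σ) :
    Fint f k t ≤ supFbetween f k ρ σ :=
  le_csSup ((isCompact_Icc.image (continuous_Fint hf)).bddAbove.mono <| by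
    rintro _ ⟨s, -, hs, rfl⟩
    exact ⟨s, abs_le.mp hs, rfl⟩) ⟨t, hρ, hσ, rfl⟩

lemma exists_Fint_le_of_growth (hf : Continuous (f k)) {ε q : ℝ} (hε : 0 ≤ ε)
    (h : ∃ K, ∀ t, K < |t| → Fint f k t ≤ ε * |t| ^ q) :
    ∃ C, ∀ t, Fint f k t ≤ ε * |t| ^ q + C := by
  obtain ⟨K, hK⟩ := h
  obtain ⟨C, hC⟩ := (isCompact_Icc (a := -K) (b := K)).image (continuous_Fint hf) |>.bddAbove
  refine ⟨max C 0, fun t => ?_⟩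
  have : 0 ≤ ε * |t| ^ q := by positivity
  rcases le_or_gt |t| K with ht | ht
  · linarith [hC ⟨t, abs_le.mp ht, rfl⟩, le_max_left C 0]
  · linarith [hK t ht, le_max_right C 0]

end Primitive

noncomputable section DiscreteProblem

open Finset

variable {T : ℕ} {p : ℕ → ℝ} {f : ℕ → ℝ → ℝ} {pm pp : ℝ}

def toH (T : ℕ) : EuclideanSpace ℝ (Fin T) →ₗ[ℝ] ℕ → ℝ where
  toFun x k := if h : 1 ≤ k ∧ k ≤ T then x ⟨k - 1, by omega⟩ else 0
  map_add' x y := by ext k; by_cases h : 1 ≤ k ∧ k ≤ T <;> simp [h]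
  map_smul' a x := by ext k; by_cases h : 1 ≤ k ∧ k ≤ T <;> simp [h]

lemma toH_apply_zero (x : EuclideanSpace ℝ (Fin T)) : toH T x 0 = 0 := by simp [toH]

lemma toH_apply_top (x : EuclideanSpace ℝ (Fin T)) : toH T x (T + 1) = 0 := by simp [toH]

lemma toH_apply_succ (x : EuclideanSpace ℝ (Fin T)) (i : Fin T) : toH T x (i + 1) = x i := by
  simp [toH]

lemma toH_toLp_apply {v : ℕ → ℝ} {k : ℕ} (hk₁ : 1 ≤ k) (hkT : k ≤ T) :
    toH T (WithLp.toLp 2 fun i : Fin T => v (i + 1)) k = v k := by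
  simp [toH, hk₁, hkT, Nat.sub_add_cancel hk₁]

lemma toH_toLp_apply_of_mem_H {v : ℕ → ℝ} (hv₀ : v 0 = 0) (hvT : v (T + 1) = 0) {k : ℕ}
    (hk : k ≤ T + 1) : toH T (WithLp.toLp 2 fun i : Fin T => v (i + 1)) k = v k := by
  rcases Nat.eq_zero_or_pos k with rfl | hk₁
  · rw [toH_apply_zero, hv₀]
  rcases hk.eq_or_lt with rfl | hkT
  · rw [toH_apply_top, hvT]
  exact toH_toLp_apply hk₁ (by omega)

lemma continuous_toH_apply (k : ℕ) :
    Continuous fun x : EuclideanSpace ℝ (Fin T) => toH T x k :=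
  (continuous_apply k).comp (toH T).continuous_of_finiteDimensional

lemma abs_toH_apply_le (x : EuclideanSpace ℝ (Fin T)) (k : ℕ) :
    |toH T x k| ≤ ‖WithLp.ofLp x‖ := by
  simp only [toH, LinearMap.coe_mk, AddHom.coe_mk]
  split_ifs
  · exact norm_le_pi_norm (WithLp.ofLp x) _
  · simp

lemma exists_le_abs_of_le_norm {x : EuclideanSpace ℝ (Fin T)} {r : ℝ} (hr : 0 < r)
    (hx : r ≤ ‖WithLp.ofLp x‖) : ∃ i, r ≤ |x i| := by
  by_contra! h
  exact hx.not_gt ((pi_norm_lt_iff hr).mpr h)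

lemma distinctH_toH {x y : EuclideanSpace ℝ (Fin T)} (h : x ≠ y) :
    DistinctH T (toH T x) (toH T y) := by
  obtain ⟨i, hi⟩ : ∃ i, x i ≠ y i := by
    by_contra! h'
    exact h (PiLp.ext h')
  exact ⟨i + 1, by omega, i.isLt, by rwa [toH_apply_succ, toH_apply_succ]⟩

lemma nonzeroH_toH {x : EuclideanSpace ℝ (Fin T)} (h : x ≠ 0) : NonzeroH T (toH T x) := by
  obtain ⟨k, hk₁, hkT, hk⟩ := distinctH_toH h
  exact ⟨k, hk₁, hkT, by simpa using hk⟩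

lemma abs_le_sum_abs_sub {u : ℕ → ℝ} (hu : u 0 = 0) {k n : ℕ} (hk : k ≤ n) :
    |u k| ≤ ∑ i ∈ Icc 1 n, |u i - u (i - 1)| := by
  have htel : ∀ k, |u k| ≤ ∑ i ∈ Icc 1 k, |u i - u (i - 1)| := by
    intro k
    induction k with
    | zero => simp [hu]
    | succ k ih =>
      rw [sum_Icc_succ_top (by omega), Nat.add_sub_cancel]
      calc |u (k + 1)| ≤ |u k| + |u (k + 1) - u k| := by
            simpa using abs_add_le (u k) (u (k + 1) - u k)
        _ ≤ _ := by linarith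
  exact (htel k).trans <| sum_le_sum_of_subset_of_nonneg (Icc_subset_Icc_right hk)
    fun _ _ _ => abs_nonneg _

lemma muF_nonneg (hp : ∀ j ≤ T, 0 ≤ p j) (u : ℕ → ℝ) : 0 ≤ muF T p u :=
  sum_nonneg fun k hk => by
    have := hp (k - 1) (by simp at hk; omega)
    positivity

lemma muF_pos (hp : ∀ j ≤ T, 0 < p j) {u : ℕ → ℝ} (hu : u 0 = 0) {k : ℕ} (hk : k ≤ T + 1)
    (huk : u k ≠ 0) : 0 < muF T p u := by
  obtain ⟨i, hi, hpos⟩ := exists_lt_of_sum_lt <|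
    (sum_const_zero.trans_lt (abs_pos.mpr huk)).trans_le (abs_le_sum_abs_sub hu hk)
  refine sum_pos' (fun k hk => ?_) ⟨i, hi, ?_⟩
  · have := hp (k - 1) (by simp at hk; omega)
    positivity
  · have := hp (i - 1) (by simp at hi; omega)
    positivity

lemma rpow_le_rpow_add_one {a q q' : ℝ} (ha : 0 ≤ a) (hq : 0 ≤ q) (hqq' : q ≤ q') :
    a ^ q ≤ a ^ q' + 1 := by
  rcases le_total 1 a with h | h
  · linarith [Real.rpow_le_rpow_of_exponent_le h hqq']
  · linarith [Real.rpow_le_one ha h hq, Real.rpow_nonneg ha q']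

lemma rpow_le_muF (hpm : 1 ≤ pm) (hpm_le : ∀ j ≤ T, pm ≤ p j)
    (hle_pp : ∀ j ≤ T, p j ≤ pp) {u : ℕ → ℝ} (hu : u 0 = 0) {k : ℕ} (hk : k ≤ T + 1) :
    |u k| ^ pm ≤ ((T : ℝ) + 1) ^ (pm - 1) * (pp * muF T p u + (T + 1)) := by
  have hterm : ∀ i ∈ Icc 1 (T + 1), |u i - u (i - 1)| ^ pm
      ≤ pp * ((1 / p (i - 1)) * |u i - u (i - 1)| ^ p (i - 1)) + 1 := by
    intro i hi
    have hi' : i - 1 ≤ T := by simp at hi; omega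
    have hp₀ : 0 < p (i - 1) := by linarith [hpm_le _ hi']
    have : |u i - u (i - 1)| ^ p (i - 1)
        ≤ pp * ((1 / p (i - 1)) * |u i - u (i - 1)| ^ p (i - 1)) :=
      calc |u i - u (i - 1)| ^ p (i - 1)
          = p (i - 1) * ((1 / p (i - 1)) * |u i - u (i - 1)| ^ p (i - 1)) := by field_simp
        _ ≤ _ := by gcongr; exact hle_pp _ hi'
    linarith [rpow_le_rpow_add_one (abs_nonneg (u i - u (i - 1))) (by linarith) (hpm_le _ hi')]
  calc |u k| ^ pm ≤ (∑ i ∈ Icc 1 (T + 1), |u i - u (i - 1)|) ^ pm :=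
        Real.rpow_le_rpow (abs_nonneg _) (abs_le_sum_abs_sub hu hk) (by linarith)
    _ ≤ ((T : ℝ) + 1) ^ (pm - 1) * ∑ i ∈ Icc 1 (T + 1), |u i - u (i - 1)| ^ pm := by
        simpa using
          Real.rpow_sum_le_const_mul_sum_rpow (Icc 1 (T + 1)) (fun i => u i - u (i - 1)) hpm
    _ ≤ ((T : ℝ) + 1) ^ (pm - 1) * (pp * muF T p u + (T + 1)) := by
        gcongr
        calc ∑ i ∈ Icc 1 (T + 1), |u i - u (i - 1)| ^ pm
            ≤ ∑ i ∈ Icc 1 (T + 1),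
                (pp * ((1 / p (i - 1)) * |u i - u (i - 1)| ^ p (i - 1)) + 1) := sum_le_sum hterm
          _ = pp * muF T p u + (T + 1) := by simp [muF, sum_add_distrib, mul_sum]

def potential (T : ℕ) (f : ℕ → ℝ → ℝ) (u : ℕ → ℝ) : ℝ :=
  ∑ k ∈ Icc 1 T, Fint f k (u k)

-- `E_λ = μ + λ J` read on `ℝ^T ≅ H`, where `J = -potential`
def energy (T : ℕ) (p : ℕ → ℝ) (f : ℕ → ℝ → ℝ) (lam : ℝ) (x : EuclideanSpace ℝ (Fin T)) :
    ℝ :=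
  muF T p (toH T x) - lam * potential T f (toH T x)

def firstVariation (T : ℕ) (p : ℕ → ℝ) (f : ℕ → ℝ → ℝ) (lam : ℝ) (u : ℕ → ℝ) :
    (ℕ → ℝ) →ₗ[ℝ] ℝ where
  toFun w := ∑ k ∈ Icc 1 (T + 1),
      |u k - u (k - 1)| ^ (p (k - 1) - 2) * (u k - u (k - 1)) * (w k - w (k - 1))
    - lam * ∑ k ∈ Icc 1 T, f k (u k) * w k
  map_add' w w' := by
    simp only [Pi.add_apply, add_sub_add_comm, mul_add, sum_add_distrib]
  map_smul' a w := by
    simp only [Pi.smul_apply, smul_eq_mul, RingHom.id_apply, mul_sub, mul_sum]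
    congr 1
    · exact sum_congr rfl fun _ _ => by ring
    · exact sum_congr rfl fun _ _ => by ring

def energyGradient (T : ℕ) (p : ℕ → ℝ) (f : ℕ → ℝ → ℝ) (lam : ℝ)
    (x : EuclideanSpace ℝ (Fin T)) : EuclideanSpace ℝ (Fin T) :=
  (InnerProductSpace.toDual ℝ _).symm
    (LinearMap.toContinuousLinearMap ((firstVariation T p f lam (toH T x)).comp (toH T)))

lemma inner_energyGradient (lam : ℝ) (x v : EuclideanSpace ℝ (Fin T)) :
    ⟪energyGradient T p f lam x, v⟫ = firstVariation T p f lam (toH T x) (toH T v) := by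
  simp [energyGradient, InnerProductSpace.toDual_symm_apply]

lemma continuous_abs_rpow_sub_two_mul {q : ℝ} (hq : 1 < q) :
    Continuous fun t : ℝ => |t| ^ (q - 2) * t := by
  have hderiv : deriv (fun t : ℝ => ‖t‖ ^ q) = fun t => q * |t| ^ (q - 2) * t :=
    funext fun t => by simpa using (hasDerivAt_abs_rpow t hq).deriv
  have hc := (contDiff_norm_rpow (E := ℝ) hq).continuous_deriv le_rfl
  rw [hderiv] at hc
  convert hc.const_mul q⁻¹ using 2 with t
  field_simp

lemma continuous_firstVariation_toH (hp : ∀ j ≤ T, 1 < p j)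
    (hf : ∀ k, 1 ≤ k → k ≤ T → Continuous (f k)) (lam : ℝ) (w : ℕ → ℝ) :
    Continuous fun x : EuclideanSpace ℝ (Fin T) => firstVariation T p f lam (toH T x) w := by
  simp only [firstVariation, LinearMap.coe_mk, AddHom.coe_mk]
  refine (continuous_finsetSum _ fun k hk => ?_).sub
    (continuous_const.mul (continuous_finsetSum _ fun k hk => ?_))
  · have hk' : k - 1 ≤ T := by simp at hk; omega
    exact ((continuous_abs_rpow_sub_two_mul (hp _ hk')).comp
      ((continuous_toH_apply k).sub (continuous_toH_apply (k - 1)))).mul continuous_const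
  · simp only [mem_Icc] at hk
    exact ((hf k hk.1 hk.2).comp (continuous_toH_apply k)).mul continuous_const

lemma continuous_energyGradient (hp : ∀ j ≤ T, 1 < p j)
    (hf : ∀ k, 1 ≤ k → k ≤ T → Continuous (f k)) (lam : ℝ) :
    Continuous (energyGradient T p f lam) :=
  (InnerProductSpace.toDual ℝ _).symm.continuous.comp <| continuous_clm_apply.mpr fun v => by
    simpa using continuous_firstVariation_toH hp hf lam (toH T v)

lemma continuous_energy (hp : ∀ j ≤ T, 0 ≤ p j) (hf : ∀ k, 1 ≤ k → k ≤ T → Continuous (f k))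
    (lam : ℝ) : Continuous (energy T p f lam) := by
  refine (continuous_finsetSum _ fun k hk => ?_).sub
    (continuous_const.mul (continuous_finsetSum _ fun k hk => ?_))
  · have hk' : k - 1 ≤ T := by simp at hk; omega
    exact continuous_const.mul <| ((continuous_toH_apply k).sub
      (continuous_toH_apply (k - 1))).abs.rpow_const fun _ => Or.inr (hp _ hk')
  · simp only [mem_Icc] at hk
    exact (continuous_Fint (hf k hk.1 hk.2)).comp (continuous_toH_apply k)

lemma hasDerivAt_muF (hp : ∀ j ≤ T, 1 < p j) (u w : ℕ → ℝ) :
    HasDerivAt (fun s : ℝ => muF T p (u + s • w)) (∑ k ∈ Icc 1 (T + 1),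
      |u k - u (k - 1)| ^ (p (k - 1) - 2) * (u k - u (k - 1)) * (w k - w (k - 1))) 0 := by
  refine HasDerivAt.fun_sum fun k hk => ?_
  have hq := hp (k - 1) (by simp at hk; omega)
  have h := ((hasDerivAt_abs_rpow (u k - u (k - 1)) hq).comp_of_eq 0
    (((hasDerivAt_mul_const (w k)).const_add (u k)).sub
      ((hasDerivAt_mul_const (w (k - 1))).const_add (u (k - 1)))) (by simp)).const_mul
        (1 / p (k - 1))
  simp only [Pi.add_apply, Pi.smul_apply, smul_eq_mul]
  refine (h.congr_deriv ?_).congr_of_eventuallyEq (Eventually.of_forall fun s => by simp)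
  field_simp

lemma hasDerivAt_potential (hf : ∀ k, 1 ≤ k → k ≤ T → Continuous (f k)) (u w : ℕ → ℝ) :
    HasDerivAt (fun s : ℝ => potential T f (u + s • w)) (∑ k ∈ Icc 1 T, f k (u k) * w k) 0 := by
  refine HasDerivAt.fun_sum fun k hk => ?_
  simp only [mem_Icc] at hk
  have h := (hasDerivAt_Fint (hf k hk.1 hk.2) (u k)).comp_of_eq 0
    ((hasDerivAt_mul_const (w k)).const_add (u k)) (by simp)
  simpa only [Pi.add_apply, Pi.smul_apply, smul_eq_mul, Function.comp_def] using h

lemma hasLineDerivAt_energy (hp : ∀ j ≤ T, 1 < p j)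
    (hf : ∀ k, 1 ≤ k → k ≤ T → Continuous (f k)) (lam : ℝ) (x v : EuclideanSpace ℝ (Fin T)) :
    HasLineDerivAt ℝ (energy T p f lam) ⟪energyGradient T p f lam x, v⟫ x v := by
  rw [inner_energyGradient]
  have := (hasDerivAt_muF hp (toH T x) (toH T v)).fun_sub
    ((hasDerivAt_potential hf (toH T x) (toH T v)).const_mul lam)
  simpa [HasLineDerivAt, energy, firstVariation] using this

lemma energy_zero (hp : ∀ j ≤ T, 0 < p j) (lam : ℝ) : energy T p f lam 0 = 0 := by
  have hμ : muF T p 0 = 0 := sum_eq_zero fun k hk => by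
    simp [Real.zero_rpow (hp (k - 1) (by simp at hk; omega)).ne']
  simp [energy, potential, hμ]

theorem isCriticalPoint_toH {lam : ℝ} {x : EuclideanSpace ℝ (Fin T)}
    (hx : energyGradient T p f lam x = 0) : IsCriticalPoint T p f lam (toH T x) := by
  refine ⟨toH_apply_zero x, toH_apply_top x, fun v hv₀ hvT => ?_⟩
  have hv : ∀ k ≤ T + 1, toH T (WithLp.toLp 2 fun i : Fin T => v (i + 1)) k = v k :=
    fun k hk => toH_toLp_apply_of_mem_H hv₀ hvT hk
  have h :=
    inner_energyGradient (p := p) (f := f) lam x (WithLp.toLp 2 fun i : Fin T => v (i + 1))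
  rw [hx, inner_zero_left, eq_comm] at h
  simp only [firstVariation, LinearMap.coe_mk, AddHom.coe_mk, sub_eq_zero] at h
  convert h using 2
  · rename_i k hk
    rw [hv k (mem_Icc.mp hk).2, hv (k - 1) (by have := (mem_Icc.mp hk).2; omega)]
  · exact sum_congr rfl fun k hk => by rw [hv k (by have := (mem_Icc.mp hk).2; omega)]

lemma potential_le_sum_supFle (hf : ∀ k, 1 ≤ k → k ≤ T → Continuous (f k))
    {x : EuclideanSpace ℝ (Fin T)} {s : ℝ} (hx : ‖WithLp.ofLp x‖ ≤ s) :
    potential T f (toH T x) ≤ ∑ k ∈ Icc 1 T, supFle f k s :=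
  sum_le_sum fun k hk => by
    simp only [mem_Icc] at hk
    exact Fint_le_supFle (hf k hk.1 hk.2) ((abs_toH_apply_le x k).trans hx)

lemma potential_nonpos (hf : ∀ k, 1 ≤ k → k ≤ T → Continuous (f k)) {r s : ℝ} (hr : 0 < r)
    (h3 : ∀ k, 1 ≤ k → k ≤ T →
      supFbetween f k r s ≤ -∑ j ∈ (Icc 1 T).erase k, supFle f j s)
    {x : EuclideanSpace ℝ (Fin T)} (hrx : r ≤ ‖WithLp.ofLp x‖) (hxs : ‖WithLp.ofLp x‖ ≤ s) :
    potential T f (toH T x) ≤ 0 := by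
  obtain ⟨i, hi⟩ := exists_le_abs_of_le_norm hr hrx
  have hk : (i : ℕ) + 1 ∈ Icc 1 T := mem_Icc.mpr ⟨by omega, i.isLt⟩
  have hmax : Fint f (i + 1) (toH T x (i + 1)) ≤ supFbetween f (i + 1) r s := by
    rw [toH_apply_succ]
    exact Fint_le_supFbetween (hf _ (by omega) i.isLt) hi
      ((norm_le_pi_norm (WithLp.ofLp x) i).trans hxs)
  have hrest : ∑ j ∈ (Icc 1 T).erase (i + 1), Fint f j (toH T x j)
      ≤ ∑ j ∈ (Icc 1 T).erase (i + 1), supFle f j s := sum_le_sum fun j hj => by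
    have hj' := mem_Icc.mp (mem_of_mem_erase hj)
    exact Fint_le_supFle (hf j hj'.1 hj'.2) ((abs_toH_apply_le x j).trans hxs)
  rw [potential, ← sum_erase_add _ _ hk]
  linarith [h3 _ (by omega) i.isLt]

lemma energy_pos (hp : ∀ j ≤ T, 0 < p j) (hf : ∀ k, 1 ≤ k → k ≤ T → Continuous (f k))
    {lam r s : ℝ} (hlam : 0 ≤ lam) (hr : 0 < r)
    (h3 : ∀ k, 1 ≤ k → k ≤ T →
      supFbetween f k r s ≤ -∑ j ∈ (Icc 1 T).erase k, supFle f j s)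
    {x : EuclideanSpace ℝ (Fin T)} (hrx : r ≤ ‖WithLp.ofLp x‖) (hxs : ‖WithLp.ofLp x‖ ≤ s) :
    0 < energy T p f lam x := by
  obtain ⟨i, hi⟩ := exists_le_abs_of_le_norm hr hrx
  have hμ : 0 < muF T p (toH T x) := muF_pos hp (toH_apply_zero x) (k := i + 1) (by omega)
    (by rw [toH_apply_succ]; exact abs_pos.mp (hr.trans_le hi))
  have := mul_nonpos_of_nonneg_of_nonpos hlam (potential_nonpos hf hr h3 hrx hxs)
  rw [energy]
  linarith

lemma neg_mul_sum_supFle_le_energy (hp : ∀ j ≤ T, 0 ≤ p j)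
    (hf : ∀ k, 1 ≤ k → k ≤ T → Continuous (f k)) {lam s : ℝ} (hlam : 0 ≤ lam)
    {x : EuclideanSpace ℝ (Fin T)} (hx : ‖WithLp.ofLp x‖ ≤ s) :
    -(lam * ∑ k ∈ Icc 1 T, supFle f k s) ≤ energy T p f lam x := by
  have := mul_le_mul_of_nonneg_left (potential_le_sum_supFle hf hx) hlam
  rw [energy]
  linarith [muF_nonneg hp (toH T x)]

lemma muF_le_two_mul_energy_add (hpm : 1 ≤ pm) (hpm_le : ∀ j ≤ T, pm ≤ p j)
    (hle_pp : ∀ j ≤ T, p j ≤ pp) (hf : ∀ k, 1 ≤ k → k ≤ T → Continuous (f k))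
    (hgrowth : ∀ k, 1 ≤ k → k ≤ T → ∀ ε : ℝ, 0 < ε → ∃ K > (0 : ℝ), ∀ t : ℝ, K < |t| →
      Fint f k t ≤ ε * |t| ^ pm)
    {lam : ℝ} (hlam : 0 < lam) :
    ∃ C, ∀ x : EuclideanSpace ℝ (Fin T), muF T p (toH T x) ≤ 2 * energy T p f lam x + C := by
  set B := ((T : ℝ) + 1) ^ (pm - 1)
  have hB : 0 < B := by positivity
  have hpp : 0 < pp := by linarith [hpm_le 0 (Nat.zero_le _), hle_pp 0 (Nat.zero_le _)]
  -- `ε` is small enough that `lam * potential` absorbs at most half of `μ`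
  set ε := 1 / (2 * lam * (T + 1) * B * pp) with hε_def
  have hε : 0 < ε := by positivity
  have hC : ∀ k, ∃ C, 1 ≤ k → k ≤ T → ∀ t, Fint f k t ≤ ε * |t| ^ pm + C := fun k => by
    by_cases hk : 1 ≤ k ∧ k ≤ T
    · obtain ⟨C, hC⟩ := exists_Fint_le_of_growth (hf k hk.1 hk.2) hε.le
        ((hgrowth k hk.1 hk.2 ε hε).imp fun _ hK => hK.2)
      exact ⟨C, fun _ _ => hC⟩
    · exact ⟨0, fun h₁ h₂ => absurd ⟨h₁, h₂⟩ hk⟩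
  choose C hC using hC
  refine ⟨2 * lam * (T * (ε * (B * (T + 1))) + ∑ k ∈ Icc 1 T, C k), fun x => ?_⟩
  set μ := muF T p (toH T x)
  have hpot : potential T f (toH T x)
      ≤ T * (ε * (B * (pp * μ + (T + 1)))) + ∑ k ∈ Icc 1 T, C k :=
    calc potential T f (toH T x) ≤ ∑ k ∈ Icc 1 T, (ε * (B * (pp * μ + (T + 1))) + C k) :=
          sum_le_sum fun k hk => by
            have hk' := mem_Icc.mp hk
            refine (hC k hk'.1 hk'.2 _).trans (add_le_add_left ?_ _)
            exact mul_le_mul_of_nonneg_left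
              (rpow_le_muF hpm hpm_le hle_pp (toH_apply_zero x) (by omega)) hε.le
      _ = _ := by simp [sum_add_distrib]
  have hkey : lam * (T * (ε * (B * pp))) ≤ 1 / 2 := by
    have : lam * (T * (ε * (B * pp))) = T / (2 * (T + 1)) := by rw [hε_def]; field_simp
    rw [this, div_le_iff₀ (by positivity)]
    linarith
  have hμ : 0 ≤ μ := muF_nonneg (fun j hj => by linarith [hpm_le j hj]) _
  have hlampot := mul_le_mul_of_nonneg_left hpot hlam.le
  have := mul_le_mul_of_nonneg_right hkey hμ
  rw [energy]
  nlinarith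

theorem isCompact_energy_sublevel (hpm : 1 ≤ pm) (hpm_le : ∀ j ≤ T, pm ≤ p j)
    (hle_pp : ∀ j ≤ T, p j ≤ pp) (hf : ∀ k, 1 ≤ k → k ≤ T → Continuous (f k))
    (hgrowth : ∀ k, 1 ≤ k → k ≤ T → ∀ ε : ℝ, 0 < ε → ∃ K > (0 : ℝ), ∀ t : ℝ, K < |t| →
      Fint f k t ≤ ε * |t| ^ pm)
    {lam : ℝ} (hlam : 0 < lam) (A : ℝ) : IsCompact {x | energy T p f lam x ≤ A} := by
  obtain ⟨C, hC⟩ := muF_le_two_mul_energy_add hpm hpm_le hle_pp hf hgrowth hlam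
  set R := ((T : ℝ) + 1) ^ (pm - 1) * (pp * (2 * A + C) + (T + 1)) + 1
  refine ((isCompact_univ_pi fun _ => isCompact_Icc (a := -R) (b := R)).image
    (PiLp.continuous_toLp 2 _)).of_isClosed_subset
    (isClosed_le (continuous_energy (fun j hj => by linarith [hpm_le j hj]) hf lam)
      continuous_const) fun x hx => ⟨WithLp.ofLp x, fun i _ => abs_le.mp ?_, rfl⟩
  have hμ : muF T p (toH T x) ≤ 2 * A + C := by
    linarith [hC x, show energy T p f lam x ≤ A from hx]
  have hpow := rpow_le_muF hpm hpm_le hle_pp (toH_apply_zero x) (k := i + 1) (by omega)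
  rw [toH_apply_succ] at hpow
  have hpp : 0 ≤ pp := by linarith [hpm_le 0 (Nat.zero_le _), hle_pp 0 (Nat.zero_le _)]
  calc |x i| = |x i| ^ (1 : ℝ) := (Real.rpow_one _).symm
    _ ≤ |x i| ^ pm + 1 := rpow_le_rpow_add_one (abs_nonneg _) zero_le_one hpm
    _ ≤ R := by
        have : ((T : ℝ) + 1) ^ (pm - 1) * (pp * muF T p (toH T x) + (T + 1))
            ≤ ((T : ℝ) + 1) ^ (pm - 1) * (pp * (2 * A + C) + (T + 1)) := by gcongr
        linarith

lemma potential_toH_toLp (v : ℕ → ℝ) :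
    potential T f (toH T (WithLp.toLp 2 fun i : Fin T => v (i + 1))) = potential T f v :=
  sum_congr rfl fun k hk => by rw [toH_toLp_apply (mem_Icc.mp hk).1 (mem_Icc.mp hk).2]

lemma exists_pos_energy_lt (hp : ∀ j ≤ T, 0 ≤ p j) {x : EuclideanSpace ℝ (Fin T)} {S : ℝ}
    (hS : S < potential T f (toH T x)) : ∃ lam > (0 : ℝ), energy T p f lam x < -(lam * S) := by
  have hμ := muF_nonneg hp (toH T x)
  refine ⟨(muF T p (toH T x) + 1) / (potential T f (toH T x) - S),
    div_pos (by linarith) (by linarith), ?_⟩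
  have := div_mul_cancel₀ (muF T p (toH T x) + 1) (sub_pos.mpr hS).ne'
  rw [energy]
  linarith

lemma exponent_bounds (hp : ∀ k ≤ T + 1, 1 < p k) (hpm : IsLeast (p '' Set.Icc 0 (T + 1)) pm)
    (hpp : IsGreatest (p '' Set.Icc 0 (T + 1)) pp) :
    1 ≤ pm ∧ (∀ j ≤ T, pm ≤ p j) ∧ ∀ j ≤ T, p j ≤ pp := by
  refine ⟨?_, fun j hj => hpm.2 ⟨j, ⟨j.zero_le, by omega⟩, rfl⟩,
    fun j hj => hpp.2 ⟨j, ⟨j.zero_le, by omega⟩, rfl⟩⟩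
  obtain ⟨k, hk, rfl⟩ := hpm.1
  exact (hp k hk.2).le

end DiscreteProblem

theorem stmt18_general (T : ℕ) (p : ℕ → ℝ) (hp : ∀ k ≤ T + 1, 1 < p k)
    (pm : ℝ) (hpm : IsLeast (p '' Set.Icc 0 (T + 1)) pm)
    (pp : ℝ) (hpp : IsGreatest (p '' Set.Icc 0 (T + 1)) pp)
    (f : ℕ → ℝ → ℝ) (hf : ∀ k, 1 ≤ k → k ≤ T → Continuous (f k))
    (r' s' : ℝ) (hr' : 0 < r') (hrs' : r' < s')
    -- (1): limsup_{|t|→∞} F(k,t)/|t|^{p⁻} ≤ 0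
    (h1 : ∀ k, 1 ≤ k → k ≤ T → ∀ ε : ℝ, 0 < ε → ∃ K > (0:ℝ), ∀ t : ℝ, K < |t| →
      Fint f k t ≤ ε * |t| ^ pm)
    -- (2): Σ_k sup_{|t|≤s′} F(k,t) < Σ_k sup_{t∈ℝ} F(k,t)
    (h2 : ∃ t : ℕ → ℝ, ∑ k ∈ Finset.Icc 1 T, supFle f k s' <
      ∑ k ∈ Finset.Icc 1 T, Fint f k (t k))
    -- (3): sup_{r′≤|t|≤s′} F(k,t) ≤ −Σ_{h≠k} sup_{|t|≤s′} F(h,t)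
    (h3 : ∀ k, 1 ≤ k → k ≤ T →
      supFbetween f k r' s' ≤ -∑ j ∈ (Finset.Icc 1 T).erase k, supFle f j s') :
    ∃ lamStar > (0:ℝ), ∃ u₁ u₂ u₃ : ℕ → ℝ,
      IsCriticalPoint T p f lamStar u₁ ∧ IsCriticalPoint T p f lamStar u₂ ∧
      IsCriticalPoint T p f lamStar u₃ ∧
      DistinctH T u₁ u₂ ∧ DistinctH T u₁ u₃ ∧ DistinctH T u₂ u₃ ∧
      NonzeroH T u₂ ∧ NonzeroH T u₃ := by
  have hp' : ∀ j ≤ T, 1 < p j := fun j hj => hp j (by omega)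
  have hp₀ : ∀ j ≤ T, 0 < p j := fun j hj => zero_lt_one.trans (hp' j hj)
  obtain ⟨hpm₁, hpm_le, hle_pp⟩ := exponent_bounds hp hpm hpp
  obtain ⟨t, ht⟩ := h2
  obtain ⟨lam, hlam, hEw⟩ := exists_pos_energy_lt (fun j hj => (hp₀ j hj).le)
    (x := WithLp.toLp 2 fun i => t (i + 1)) (by rwa [potential_toH_toLp])
  obtain ⟨x₁, x₂, x₃, h₁, h₂, h₃, h21, h10, h03⟩ := exists_three_critical_points
    (continuous_energy (fun j hj => (hp₀ j hj).le) hf lam) (continuous_energyGradient hp' hf lam)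
    (hasLineDerivAt_energy hp' hf lam) (isCompact_energy_sublevel hpm₁ hpm_le hle_pp hf h1 hlam)
    (continuous_norm.comp (PiLp.continuous_ofLp 2 _)) hrs'.le (x₀ := 0) (by simpa using hr')
    (fun x hrx hxs => (energy_zero hp₀ lam).trans_lt (energy_pos hp₀ hf hlam.le hr' h3 hrx hxs))
    (fun x hx => neg_mul_sum_supFle_le_energy (fun j hj => (hp₀ j hj).le) hf hlam.le hx) hEw
  refine ⟨lam, hlam, _, _, _, isCriticalPoint_toH h₁, isCriticalPoint_toH h₂,
    isCriticalPoint_toH h₃, distinctH_toH ?_, distinctH_toH ?_, distinctH_toH ?_,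
    nonzeroH_toH ?_, nonzeroH_toH ?_⟩ <;> rintro rfl <;> linarith

theorem stmt18 (T : ℕ) (hT : 1 ≤ T) (p : ℕ → ℝ) (hp : ∀ k ≤ T + 1, 1 < p k)
    (pm : ℝ) (hpm : IsLeast (p '' Set.Icc 0 (T + 1)) pm)
    (pp : ℝ) (hpp : IsGreatest (p '' Set.Icc 0 (T + 1)) pp)
    (f : ℕ → ℝ → ℝ) (hf : ∀ k, 1 ≤ k → k ≤ T → Continuous (f k))
    (r' s' : ℝ) (hr' : 0 < r') (hrs' : r' < s')
    (c : ℝ) (hc : 0 < c)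
    (hcr : r' < (1 / 2) * (c * pm / ((T:ℝ) + 1)) ^ (1 / pp))
    (hcs : (((T:ℝ) + 1) / 2) * (c * pp) ^ (1 / pm) < s')
    -- (1): limsup_{|t|→∞} F(k,t)/|t|^{p⁻} ≤ 0
    (h1 : ∀ k, 1 ≤ k → k ≤ T → ∀ ε : ℝ, 0 < ε → ∃ K > (0:ℝ), ∀ t : ℝ, K < |t| →
      Fint f k t ≤ ε * |t| ^ pm)
    -- (2): Σ_k sup_{|t|≤s′} F(k,t) < Σ_k sup_{t∈ℝ} F(k,t)
    (h2 : ∃ t : ℕ → ℝ, ∑ k ∈ Finset.Icc 1 T, supFle f k s' <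
      ∑ k ∈ Finset.Icc 1 T, Fint f k (t k))
    -- (3): sup_{r′≤|t|≤s′} F(k,t) ≤ −Σ_{h≠k} sup_{|t|≤s′} F(h,t)
    (h3 : ∀ k, 1 ≤ k → k ≤ T →
      supFbetween f k r' s' ≤ -∑ j ∈ (Finset.Icc 1 T).erase k, supFle f j s') :
    ∃ lamStar > (0:ℝ), ∃ u₁ u₂ u₃ : ℕ → ℝ,
      IsCriticalPoint T p f lamStar u₁ ∧ IsCriticalPoint T p f lamStar u₂ ∧
      IsCriticalPoint T p f lamStar u₃ ∧
      DistinctH T u₁ u₂ ∧ DistinctH T u₁ u₃ ∧ DistinctH T u₂ u₃ ∧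
      NonzeroH T u₂ ∧ NonzeroH T u₃ :=
  stmt18_general T p hp pm hpm pp hpp f hf r' s' hr' hrs' h1 h2 h3
end
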